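/- For k odd, with b(k) = 2^{k-1}/(k·C(k-1,(k-1)/2)) and f_χ as the majority magnetization map f_χ(m) = tanh(β)·Σ_{S∈{-1,1}^k}(∏_j (1+S_j m)/2)·sgn(Σ_j S_j): if tanh(β) > b(k), then there exists m* ∈ (0,1] with f_χ(m*) = m* and m* ≠ 0. -/

import Mathlib

/-!
Write `k = 2n + 1` and `Φ = majorityMap k`, so that `f_χ = tanh β · Φ`. Flipping every spin
shows that `Φ` is odd, so `Φ 0 = 0`; only the all-`true` configuration survives at `m = 1`, so
`Φ 1 = 1`. Differentiating the product at `0` gives `Φ'(0) = 2⁻ᵏ ∑_S |∑_j S_j|`; grouping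
configurations by their number `c` of `true` spins turns this into `2⁻ᵏ ∑_c C(k,c) |2c - k|`,
which telescopes via `C(k,c) (2c - k) = k (C(k-1,c-1) - C(k-1,c))` to `2k C(2n,n) / 2ᵏ`, i.e.
to `1 / b(k)`. So `tanh β > b(k)` makes the slope of `f_χ` at its fixed point `0` exceed `1`,
giving `f_χ m > m` for small `m > 0`, while `f_χ 1 = tanh β < 1`; the intermediate value
theorem gives `m*`.
-/

/-- `pm b` maps a Boolean to the spin value ±1. -/
noncomputable def pm (b : Bool) : ℝ := if b then 1 else -1

open Finset

lemma pm_not (b : Bool) : pm (!b) = -pm b := by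
  cases b <;> simp [pm]

lemma mul_sign_eq_abs (x : ℝ) : x * Real.sign x = |x| := by
  rcases lt_trichotomy x 0 with h | rfl | h
  · rw [Real.sign_of_neg h, abs_of_neg h, mul_neg_one]
  · simp
  · rw [Real.sign_of_pos h, abs_of_pos h, mul_one]

def boolFunEquivFinset (k : ℕ) : (Fin k → Bool) ≃ Finset (Fin k) where
  toFun S := {j | S j = true}
  invFun A j := decide (j ∈ A)
  left_inv S := by funext j; simp
  right_inv A := by ext j; simp

lemma sum_pm_eq (k : ℕ) (S : Fin k → Bool) :
    ∑ j, pm (S j) = 2 * (#{j | S j = true} : ℝ) - k := by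
  have hpm : ∀ b : Bool, pm b = 2 * (if b = true then 1 else 0) - 1 := by
    intro b; cases b <;> norm_num [pm]
  simp only [hpm, sum_sub_distrib, ← mul_sum, sum_boole, sum_const, card_univ,
    Fintype.card_fin, nsmul_one]

lemma sum_comp_sum_pm (k : ℕ) (F : ℝ → ℝ) :
    ∑ S : Fin k → Bool, F (∑ j, pm (S j)) =
      ∑ c ∈ range (k + 1), (k.choose c : ℝ) * F (2 * c - k) := by
  rw [Fintype.sum_equiv (boolFunEquivFinset k) _ (fun A => F (2 * (#A : ℝ) - k))
    (fun S => by rw [sum_pm_eq]; rfl), ← powerset_univ,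
    sum_powerset_apply_card (fun c => F (2 * (c : ℝ) - k))]
  simp [nsmul_eq_mul]

lemma choose_succ_succ_mul_two_mul_sub (k m : ℕ) :
    ((k + 1).choose (m + 1) : ℝ) * (2 * (m + 1) - (k + 1)) =
      (k + 1) * (k.choose m - k.choose (m + 1)) := by
  have h1 : ((k + 1 : ℕ) : ℝ) * k.choose m = (k + 1).choose (m + 1) * ((m + 1 : ℕ) : ℝ) :=
    mod_cast Nat.add_one_mul_choose_eq k m
  have h2 : ((k + 1).choose (m + 1) : ℝ) = k.choose m + k.choose (m + 1) := by
    exact_mod_cast Nat.choose_succ_succ k m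
  push_cast at h1
  linear_combination (-2) * h1 - (k + 1 : ℝ) * h2

lemma sum_choose_mul_upper_half (n : ℕ) :
    ∑ i ∈ range (n + 1),
        ((2 * n + 1).choose (n + 1 + i) : ℝ) * (2 * (n + 1 + i : ℕ) - (2 * n + 1)) =
      (2 * n + 1) * (2 * n).choose n := by
  have hterm : ∀ i ∈ range (n + 1),
      ((2 * n + 1).choose (n + 1 + i) : ℝ) * (2 * (n + 1 + i : ℕ) - (2 * n + 1)) =
        (2 * n + 1) * (2 * n).choose (n + i) -
          (2 * n + 1) * (2 * n).choose (n + (i + 1)) := by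
    intro i _
    have := choose_succ_succ_mul_two_mul_sub (2 * n) (n + i)
    rw [show n + 1 + i = n + i + 1 by ring, show n + (i + 1) = n + i + 1 by ring]
    push_cast at this ⊢
    linear_combination this
  rw [sum_congr rfl hterm, sum_range_sub' (fun i => (2 * n + 1 : ℝ) * (2 * n).choose (n + i)),
    show n + (n + 1) = 2 * n + 1 by ring, Nat.choose_succ_self]
  simp

lemma choose_mul_abs_symm {k c : ℕ} (hc : c ≤ k) :
    (k.choose (k - c) : ℝ) * |2 * ((k - c : ℕ) : ℝ) - k| =
      k.choose c * |2 * (c : ℝ) - k| := by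
  rw [Nat.choose_symm hc, Nat.cast_sub hc, ← abs_neg]
  ring_nf

lemma sum_choose_mul_abs (n : ℕ) :
    ∑ c ∈ range (2 * n + 2),
        ((2 * n + 1).choose c : ℝ) * |2 * (c : ℝ) - (2 * n + 1 : ℕ)| =
      2 * (2 * n + 1 : ℕ) * (2 * n).choose n := by
  set f : ℕ → ℝ := fun c => ((2 * n + 1).choose c : ℝ) * |2 * (c : ℝ) - (2 * n + 1 : ℕ)|
  have hlower : ∑ c ∈ range (n + 1), f c = ∑ i ∈ range (n + 1), f (n + 1 + i) := by
    rw [← sum_range_reflect]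
    refine sum_congr rfl fun i hi => ?_
    have hi := mem_range.mp hi
    rw [show n + 1 - 1 - i = 2 * n + 1 - (n + 1 + i) by omega]
    exact choose_mul_abs_symm (by omega)
  have hupper : ∑ i ∈ range (n + 1), f (n + 1 + i) = (2 * n + 1) * (2 * n).choose n := by
    rw [← sum_choose_mul_upper_half]
    refine sum_congr rfl fun i _ => ?_
    simp only [f]
    rw [abs_of_pos (by push_cast; linarith [(i.cast_nonneg : (0 : ℝ) ≤ i)])]
    push_cast; rfl
  rw [show 2 * n + 2 = (n + 1) + (n + 1) by ring, sum_range_add, hlower, hupper]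
  push_cast
  ring

lemma sum_abs_sum_pm (n : ℕ) :
    ∑ S : Fin (2 * n + 1) → Bool, |∑ j, pm (S j)| =
      2 * (2 * n + 1 : ℕ) * (2 * n).choose n := by
  rw [sum_comp_sum_pm _ abs]
  exact sum_choose_mul_abs n

lemma hasDerivAt_prod_one_add_mul_div_two {ι : Type*} (s : Finset ι) (a : ι → ℝ) :
    HasDerivAt (fun m => ∏ j ∈ s, (1 + a j * m) / 2) ((∑ j ∈ s, a j) / 2 ^ #s) 0 := by
  classical
  have h := (HasDerivAt.fun_finsetProd (u := s) fun j _ =>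
    ((hasDerivAt_id (0 : ℝ)).const_mul (a j)).const_add 1).div_const (2 ^ #s)
  simp only [id, mul_zero, add_zero, prod_const_one, smul_eq_mul, mul_one, one_mul] at h
  have hfun : (fun m => ∏ j ∈ s, (1 + a j * m) / 2) =
      fun m => (∏ j ∈ s, (1 + a j * m)) / 2 ^ #s := by
    ext m
    rw [prod_div_distrib, prod_const]
  rwa [hfun]

/-- The expected sign of the sum of `k` independent ±1 spins of mean `m`. -/
noncomputable def majorityMap (k : ℕ) (m : ℝ) : ℝ :=
  ∑ S : Fin k → Bool, (∏ j, (1 + pm (S j) * m) / 2) * Real.sign (∑ j, pm (S j))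

lemma majorityMap_neg (k : ℕ) (m : ℝ) : majorityMap k (-m) = -majorityMap k m := by
  unfold majorityMap
  rw [← (Equiv.piCongrRight fun _ : Fin k => Equiv.boolNot).sum_comp, ← sum_neg_distrib]
  refine sum_congr rfl fun S _ => ?_
  simp only [Equiv.piCongrRight_apply, Pi.map_apply, Equiv.boolNot_apply, pm_not, neg_mul,
    mul_neg, neg_neg, sum_neg_distrib, Real.sign_neg]

lemma majorityMap_zero (k : ℕ) : majorityMap k 0 = 0 := by
  have := majorityMap_neg k 0
  rw [neg_zero] at this
  linarith

lemma majorityMap_one {k : ℕ} (hk : 0 < k) : majorityMap k 1 = 1 := by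
  unfold majorityMap
  rw [Fintype.sum_eq_single (fun _ => true)]
  · simp [pm, Real.sign_of_pos (Nat.cast_pos.mpr hk)]
  · intro S hS
    obtain ⟨j, hj⟩ : ∃ j, S j = false := by
      by_contra! h
      exact hS (funext fun j => Bool.not_eq_false _ ▸ h j)
    rw [prod_eq_zero (mem_univ j) (by simp [hj, pm]), zero_mul]

lemma continuous_majorityMap (k : ℕ) : Continuous (majorityMap k) := by
  unfold majorityMap
  fun_prop

lemma hasDerivAt_majorityMap (k : ℕ) :
    HasDerivAt (majorityMap k) ((∑ S : Fin k → Bool, |∑ j, pm (S j)|) / 2 ^ k) 0 := by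
  have h := HasDerivAt.fun_sum (u := (univ : Finset (Fin k → Bool))) fun S _ =>
    (hasDerivAt_prod_one_add_mul_div_two univ fun j : Fin k => pm (S j)).mul_const
      (Real.sign (∑ j, pm (S j)))
  simp only [card_univ, Fintype.card_fin] at h
  refine h.congr_deriv ?_
  rw [sum_div]
  refine sum_congr rfl fun S _ => ?_
  rw [div_mul_eq_mul_div, mul_sign_eq_abs]

lemma exists_mem_Ioc_fixedPoint {g : ℝ → ℝ} {D : ℝ} (hcont : ContinuousOn g (Set.Icc 0 1))
    (h0 : g 0 = 0) (hD : HasDerivWithinAt g D (Set.Ioi 0) 0) (hD1 : 1 < D) (h1 : g 1 ≤ 1) :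
    ∃ m ∈ Set.Ioc (0 : ℝ) 1, g m = m := by
  have hslope := (hasDerivWithinAt_iff_tendsto_slope' Set.self_notMem_Ioi).mp hD
  obtain ⟨m₀, hslope₀, hm₀⟩ := ((hslope.eventually (eventually_gt_nhds hD1)).and
    (Ioo_mem_nhdsGT (zero_lt_one' ℝ))).exists
  have hgm₀ : m₀ < g m₀ := by
    rw [slope_def_field, h0, sub_zero, sub_zero, one_lt_div hm₀.1] at hslope₀
    exact hslope₀
  obtain ⟨m, hm, hgm⟩ := intermediate_value_Icc' hm₀.2.le
    (((hcont.mono (Set.Icc_subset_Icc_left hm₀.1.le))).sub continuousOn_id)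
    (show (0 : ℝ) ∈ Set.Icc (g 1 - 1) (g m₀ - m₀) from ⟨by linarith, by linarith⟩)
  exact ⟨m, ⟨hm₀.1.trans_le hm.1, hm.2⟩, sub_eq_zero.mp hgm⟩

theorem stmt4_general (k : ℕ) (hk : Odd k) (β : ℝ)
    (b : ℝ)
    (hb : b = 2 ^ (k - 1) / ((k : ℝ) * (Nat.choose (k - 1) ((k - 1) / 2) : ℝ)))
    (fχ : ℝ → ℝ)
    (hf : ∀ m, fχ m = Real.tanh β *
      ∑ S : Fin k → Bool, (∏ j, (1 + pm (S j) * m) / 2) * Real.sign (∑ j, pm (S j)))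
    (ht : b < Real.tanh β) :
    ∃ m ∈ Set.Ioc (0:ℝ) 1, fχ m = m ∧ m ≠ 0 := by
  obtain ⟨n, rfl⟩ := hk
  have hfχ : fχ = fun m => Real.tanh β * majorityMap (2 * n + 1) m := funext hf
  have hderiv := (hasDerivAt_majorityMap (2 * n + 1)).const_mul (Real.tanh β)
  rw [sum_abs_sum_pm, ← hfχ] at hderiv
  have hD1 : 1 < Real.tanh β * (2 * (2 * n + 1 : ℕ) * (2 * n).choose n / 2 ^ (2 * n + 1)) := by
    have hC : (0 : ℝ) < (2 * n).choose n := by exact_mod_cast Nat.choose_pos (by omega)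
    rw [hb, show 2 * n + 1 - 1 = 2 * n by omega, show 2 * n / 2 = n by omega,
      div_lt_iff₀ (by positivity)] at ht
    rw [pow_succ, mul_div_assoc', one_lt_div (by positivity)]
    linarith
  have hf1 : fχ 1 ≤ 1 := by
    simpa [hfχ, majorityMap_one] using (Real.tanh_lt_one β).le
  obtain ⟨m, hm, hfix⟩ := exists_mem_Ioc_fixedPoint
    (hfχ ▸ (continuous_const.mul (continuous_majorityMap _)).continuousOn)
    (by simp [hfχ, majorityMap_zero]) hderiv.hasDerivWithinAt hD1 hf1
  exact ⟨m, hm, hfix, hm.1.ne'⟩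

/-- Proposition 1 (instability part): for odd `k`, if `tanh β > b(k)` then the
majority magnetization map `f_χ` has a nontrivial fixed point `m* ∈ (0,1]`. -/
theorem stmt4 (k : ℕ) (hk : Odd k) (β : ℝ) (hβ : 0 < β)
    (b : ℝ)
    (hb : b = 2 ^ (k - 1) / ((k : ℝ) * (Nat.choose (k - 1) ((k - 1) / 2) : ℝ)))
    (fχ : ℝ → ℝ)
    (hf : ∀ m, fχ m = Real.tanh β *
      ∑ S : Fin k → Bool, (∏ j, (1 + pm (S j) * m) / 2) * Real.sign (∑ j, pm (S j)))
    (ht : b < Real.tanh β) :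
    ∃ m ∈ Set.Ioc (0:ℝ) 1, fχ m = m ∧ m ≠ 0 :=
  stmt4_general k hk β b hb fχ hf ht
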